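/- arXiv:2501.15303 — 4 statements merged into one kernel-verified Lean document; each statement's English description precedes it below -/
import Mathlib

section
/- Let r be a binary relation on a type α and fix y : α. Define the monotone operator F on sets of α by F(S) = {v | ∃ w, r v w ∧ (w = y ∨ w ∈ S)}. Then for every x : α, the reflexive transitive closure ReflTransGen r x y holds if and only if x = y or x belongs to the least fixed point of F. -/
theorem stmt0 {α : Type*} (r : α → α → Prop) (y : α)
    (F : Set α →o Set α)
    (hF : ∀ S : Set α, F S = {v | ∃ w, r v w ∧ (w = y ∨ w ∈ S)}) :
    ∀ x : α, Relation.ReflTransGen r x y ↔ x = y ∨ x ∈ OrderHom.lfp F := by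
  have hle : OrderHom.lfp F ≤ {x | Relation.ReflTransGen r x y} := by
    apply OrderHom.lfp_le
    rw [hF]
    rintro v ⟨w, hvw, rfl | hw⟩
    · exact Relation.ReflTransGen.single hvw
    · exact Relation.ReflTransGen.head hvw hw
  intro x
  constructor
  · intro h
    induction h using Relation.ReflTransGen.head_induction_on with
    | refl => exact Or.inl rfl
    | head hvw _ ih =>
      right
      rw [← OrderHom.map_lfp F, hF]
      rename_i a c _
      exact ⟨c, hvw, ih⟩
  · rintro (rfl | hx)
    · exact Relation.ReflTransGen.refl
    · exact hle hx
end

section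
/- Let r be a binary relation on α and S a set of elements of α. If ReflTransGen r a b, a ∈ S, and b ∉ S, then there exist c ∈ S and d ∉ S such that: ReflTransGen (fun x y => r x y ∧ x ∈ S ∧ y ∈ S) a c, r c d, and ReflTransGen r d b. -/
theorem stmt2 {α : Type*} (r : α → α → Prop) (S : Set α) (a b : α)
    (h : Relation.ReflTransGen r a b) (ha : a ∈ S) (hb : b ∉ S) :
    ∃ c d, c ∈ S ∧ d ∉ S ∧
      Relation.ReflTransGen (fun x y => r x y ∧ x ∈ S ∧ y ∈ S) a c ∧
      r c d ∧ Relation.ReflTransGen r d b := by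
  induction h using Relation.ReflTransGen.head_induction_on with
  | refl => exact absurd ha hb
  | head hax hxb ih =>
    rename_i a' x
    by_cases hx : x ∈ S
    · obtain ⟨c, d, hc, hd, h1, h2, h3⟩ := ih hx
      exact ⟨c, d, hc, hd, Relation.ReflTransGen.head ⟨hax, ha, hx⟩ h1, h2, h3⟩
    · exact ⟨a', x, ha, hx, Relation.ReflTransGen.refl, hax, hxb⟩
end

section
/- Let α be a finite type and r a binary relation on α. If ReflTransGen r a b, then there is a list l : List α with List.Chain r a l, the last element of a :: l equal to b, and l.length < Fintype.card α. -/
theorem List.chain_split {α : Type*} {R : α → α → Prop} {a b : α} {l₁ l₂ : List α} :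
    List.Chain R a (l₁ ++ b :: l₂) ↔ List.Chain R a (l₁ ++ [b]) ∧ List.Chain R b l₂ := by
  unfold List.Chain; exact List.isChain_cons_split

private lemma getLast_congr {α : Type*} (l₁ l₂ : List α) (h₁ : l₁ ≠ []) (h₂ : l₂ ≠ [])
    (h : l₁ = l₂) : l₁.getLast h₁ = l₂.getLast h₂ := by subst h; rfl

private lemma cut_lemma {α : Type*} (r : α → α → Prop) (a b x : α) (l₁ l₂ l₃ : List α)
    (hc : List.Chain r a (l₁ ++ x :: (l₂ ++ x :: l₃)))
    (hl : (a :: (l₁ ++ x :: (l₂ ++ x :: l₃))).getLast (List.cons_ne_nil _ _) = b) :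
    List.Chain r a (l₁ ++ x :: l₃) ∧
      (a :: (l₁ ++ x :: l₃)).getLast (List.cons_ne_nil _ _) = b := by
  rw [List.chain_split] at hc
  obtain ⟨h1, h2⟩ := hc
  rw [List.chain_split] at h2
  constructor
  · rw [List.chain_split]
    exact ⟨h1, h2.2⟩
  · rw [← hl]
    have e1 : (a :: (l₁ ++ x :: l₃)) = (a :: l₁) ++ (x :: l₃) := by simp
    have e2 : (a :: (l₁ ++ x :: (l₂ ++ x :: l₃))) =
        ((a :: l₁) ++ (x :: l₂)) ++ (x :: l₃) := by simp
    rw [getLast_congr _ _ _ (by simp) e1, getLast_congr _ _ _ (by simp) e2,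
      List.getLast_append_of_right_ne_nil _ _ (List.cons_ne_nil _ _),
      List.getLast_append_of_right_ne_nil _ _ (List.cons_ne_nil _ _)]

theorem stmt4 {α : Type*} [Fintype α] (r : α → α → Prop) (a b : α)
    (h : Relation.ReflTransGen r a b) :
    ∃ l : List α, List.Chain r a l ∧ (a :: l).getLast (List.cons_ne_nil a l) = b ∧
      l.length < Fintype.card α := by
  obtain ⟨l, hc, hlast⟩ := List.exists_isChain_cons_of_relationReflTransGen h
  clear h
  suffices key : ∀ n (l : List α), l.length = n → List.Chain r a l →
      (a :: l).getLast (List.cons_ne_nil a l) = b →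
      ∃ l : List α, List.Chain r a l ∧ (a :: l).getLast (List.cons_ne_nil a l) = b ∧
        l.length < Fintype.card α from key l.length l rfl hc hlast
  intro n
  induction n using Nat.strong_induction_on with
  | _ n ih =>
  intro l hn hc hlast
  subst hn
  by_cases hlt : l.length < Fintype.card α
  · exact ⟨l, hc, hlast, hlt⟩
  · have hnd : ¬ (a :: l).Nodup := by
      intro hd
      have := hd.length_le_card
      simp only [List.length_cons] at this
      omega
    rw [List.nodup_iff_sublist] at hnd
    push_neg at hnd
    obtain ⟨x, hx⟩ := hnd
    rw [List.cons_sublist_iff] at hx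
    obtain ⟨r₁, r₂, hL, hxr₁, hxs⟩ := hx
    rw [List.singleton_sublist] at hxs
    obtain ⟨s, t, hst⟩ := List.append_of_mem hxr₁
    obtain ⟨u, v, huv⟩ := List.append_of_mem hxs
    subst hst huv
    -- a :: l = s ++ x :: t ++ (u ++ x :: v)
    rcases s with _ | ⟨a', s⟩
    · -- a = x, l = t ++ u ++ x :: v
      simp only [List.nil_append, List.cons.injEq] at hL
      obtain ⟨rfl, rfl⟩ := hL
      simp only [List.append_eq] at hc hlast hlt ih
      have hc' : List.Chain r a ((t ++ u) ++ a :: v) := by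
        have : t ++ (u ++ a :: v) = (t ++ u) ++ a :: v := by simp
        rw [← this]; simpa using hc
      have hc3 : List.Chain r a v := (List.chain_split.mp hc').2
      have hl3 : (a :: v).getLast (List.cons_ne_nil _ _) = b := by
        rw [← hlast]
        rw [getLast_congr (a :: (t ++ (u ++ a :: v))) ((a :: (t ++ u)) ++ (a :: v))
          (List.cons_ne_nil _ _) (by simp) (by simp),
          List.getLast_append_of_right_ne_nil _ _ (List.cons_ne_nil _ _)]
      refine ih v.length ?_ v rfl hc3 hl3
      simp; omega
    · simp only [List.cons_append, List.cons.injEq] at hL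
      obtain ⟨rfl, rfl⟩ := hL
      have hc' : List.Chain r a (s ++ x :: ((t ++ u) ++ x :: v)) := by
        have : (s ++ x :: t) ++ (u ++ x :: v) = s ++ x :: ((t ++ u) ++ x :: v) := by simp
        rwa [this] at hc
      have hl' : (a :: (s ++ x :: ((t ++ u) ++ x :: v))).getLast
          (List.cons_ne_nil _ _) = b := by
        rw [← hlast]; apply getLast_congr; simp
      obtain ⟨hc2, hl2⟩ := cut_lemma r a b x s (t ++ u) v hc' hl'
      refine ih (s ++ x :: v).length ?_ _ rfl hc2 hl2
      simp; omega
end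

section
/- Let Σ be a type, D a finite set of pairs of lists over Σ, and w : List Σ. Define the step relation R_w on ℕ × ℕ by: R_w (i,i') (j,j') ↔ ∃ (u,v) ∈ D, j = i + u.length ∧ j' = i' + v.length ∧ (w.drop i).take u.length = u ∧ (w.drop i').take v.length = v. Then Relation.TransGen R_w (0,0) (w.length, w.length) holds if and only if there exists a nonempty list l of pairs, each pair belonging to D, such that the concatenation of the first components of l equals w and the concatenation of the second components of l equals w. -/
/-- One simultaneous PCP step in two copies of the word structure of `w`. -/
def Rstep {Γ : Type*} (D : Finset (List Γ × List Γ)) (w : List Γ) :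
    ℕ × ℕ → ℕ × ℕ → Prop := fun p q =>
  ∃ uv ∈ D, q.1 = p.1 + uv.1.length ∧ q.2 = p.2 + uv.2.length ∧
    (w.drop p.1).take uv.1.length = uv.1 ∧ (w.drop p.2).take uv.2.length = uv.2

lemma take_step {Γ : Type*} {w u : List Γ} {i : ℕ}
    (h : (w.drop i).take u.length = u) (hi : i ≤ w.length) :
    i + u.length ≤ w.length ∧ w.take (i + u.length) = w.take i ++ u := by
  have hlen := congrArg List.length h
  simp [List.length_take, List.length_drop] at hlen
  constructor
  · omega
  · rw [List.take_add, h]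

lemma drop_split {Γ : Type*} {w u r : List Γ} {i : ℕ}
    (h : u ++ r = w.drop i) (hi : i ≤ w.length) :
    (w.drop i).take u.length = u ∧ r = w.drop (i + u.length) ∧
      i + u.length ≤ w.length := by
  have h1 : (w.drop i).take u.length = u := by
    rw [← h]; simp
  have h2 : r = w.drop (i + u.length) := by
    have h3 : (w.drop i).drop u.length = r := by rw [← h]; simp
    rw [List.drop_drop] at h3
    exact h3.symm
  exact ⟨h1, h2, (take_step h1 hi).1⟩

lemma rtg_of_list {Γ : Type*} (D : Finset (List Γ × List Γ)) (w : List Γ) :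
    ∀ (l : List (List Γ × List Γ)) (a b : ℕ), a ≤ w.length → b ≤ w.length →
      (l.map Prod.fst).flatten = w.drop a → (l.map Prod.snd).flatten = w.drop b →
      (∀ p ∈ l, p ∈ D) →
      Relation.ReflTransGen (Rstep D w) (a, b) (w.length, w.length) := by
  intro l
  induction l with
  | nil =>
    intro a b ha hb h1 h2 _
    simp at h1 h2
    have ha' : a = w.length := by omega
    have hb' : b = w.length := by omega
    subst ha'; subst hb'
    exact Relation.ReflTransGen.refl
  | cons uv t ih =>
    intro a b ha hb h1 h2 hD
    simp only [List.map_cons, List.flatten_cons] at h1 h2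
    obtain ⟨t1, d1, le1⟩ := drop_split h1 ha
    obtain ⟨t2, d2, le2⟩ := drop_split h2 hb
    refine Relation.ReflTransGen.head ?_
      (ih (a + uv.1.length) (b + uv.2.length) le1 le2 d1 d2
        (fun p hp => hD p (List.mem_cons_of_mem _ hp)))
    exact ⟨uv, hD uv List.mem_cons_self, rfl, rfl, t1, t2⟩

theorem stmt14 {Γ : Type*} (D : Finset (List Γ × List Γ)) (w : List Γ) :
    Relation.TransGen (Rstep D w) (0, 0) (w.length, w.length) ↔
      ∃ l : List (List Γ × List Γ), l ≠ [] ∧ (∀ p ∈ l, p ∈ D) ∧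
        (l.map Prod.fst).flatten = w ∧ (l.map Prod.snd).flatten = w := by
  constructor
  · intro h
    suffices H : ∀ q : ℕ × ℕ, Relation.TransGen (Rstep D w) (0, 0) q →
        ∃ l : List (List Γ × List Γ), l ≠ [] ∧ (∀ p ∈ l, p ∈ D) ∧
          (l.map Prod.fst).flatten = w.take q.1 ∧
          (l.map Prod.snd).flatten = w.take q.2 ∧
          q.1 ≤ w.length ∧ q.2 ≤ w.length by
      obtain ⟨l, h1, h2, h3, h4, -, -⟩ := H _ h
      exact ⟨l, h1, h2, by simpa using h3, by simpa using h4⟩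
    intro q h
    induction h with
    | single hs =>
      obtain ⟨uv, hD, e1, e2, h3, h4⟩ := hs
      simp only at e1 e2 h3 h4
      rw [List.drop_zero] at h3 h4
      obtain ⟨le1, tk1⟩ := take_step (i := 0) (by simpa using h3) (Nat.zero_le _)
      obtain ⟨le2, tk2⟩ := take_step (i := 0) (by simpa using h4) (Nat.zero_le _)
      simp only [Nat.zero_add, List.take_zero] at le1 le2 tk1 tk2
      refine ⟨[uv], by simp, by simp [hD], ?_, ?_, ?_, ?_⟩ <;>
        simp [e1, e2, tk1, tk2, le1, le2]
    | tail hab hs ih =>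
      obtain ⟨l, hne, hD, h1, h2, hle1, hle2⟩ := ih
      obtain ⟨uv, huvD, e1, e2, h3, h4⟩ := hs
      obtain ⟨le1, tk1⟩ := take_step h3 hle1
      obtain ⟨le2, tk2⟩ := take_step h4 hle2
      refine ⟨l ++ [uv], by simp, ?_, ?_, ?_, ?_, ?_⟩
      · intro p hp
        rcases List.mem_append.mp hp with h | h
        · exact hD p h
        · simp at h; subst h; exact huvD
      · simp [e1, tk1, h1]
      · simp [e2, tk2, h2]
      · omega
      · omega
  · rintro ⟨l, hne, hD, h1, h2⟩
    obtain ⟨uv, t, rfl⟩ := List.exists_cons_of_ne_nil hne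
    simp only [List.map_cons, List.flatten_cons] at h1 h2
    have h1' : uv.1 ++ (t.map Prod.fst).flatten = w.drop 0 := by simpa using h1
    have h2' : uv.2 ++ (t.map Prod.snd).flatten = w.drop 0 := by simpa using h2
    obtain ⟨t1, d1, le1⟩ := drop_split h1' (Nat.zero_le _)
    obtain ⟨t2, d2, le2⟩ := drop_split h2' (Nat.zero_le _)
    refine Relation.TransGen.head' ?_
      (rtg_of_list D w t (0 + uv.1.length) (0 + uv.2.length) le1 le2 d1 d2
        (fun p hp => hD p (List.mem_cons_of_mem _ hp)))
    exact ⟨uv, hD uv List.mem_cons_self, rfl, rfl, t1, t2⟩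
end
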